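/- arXiv:2411.07354 — 7 statements merged into one kernel-verified Lean document; each statement's English description precedes it below -/
import Mathlib

section
/- If a finite multiset S of reals has odd cardinality, then the function c ↦ Σ_{y∈S}|c−y| has a unique minimizer over ℝ (namely the median of S). -/
/-!
Call m a strict median of S if fewer than half of the points of S lie strictly on either side of
it; when |S| is odd, the middle entry of S sorted is one. Moving from m to some c > m increases
|· - y| by exactly c - m for each y ≤ m and decreases it by at most c - m for each y > m. The
former points outnumber the latter, so Σ |c - y| ≥ Σ |m - y| + |c - m|, and symmetrically for
c < m. This gives both minimality and uniqueness.
-/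

namespace List.SortedLE

variable {α : Type*} [LinearOrder α] {l : List α}

theorem countP_lt_getElem_le (hl : l.SortedLE) {k : ℕ} (hk : k < l.length) :
    l.countP (· < l[k]) ≤ k := by
  have hdrop : (l.drop k).countP (· < l[k]) = 0 := by
    refine countP_eq_zero.2 fun y hy => ?_
    obtain ⟨j, hj, rfl⟩ := mem_iff_getElem.1 hy
    rw [getElem_drop]
    simpa using sortedLE_iff_getElem_le_getElem_of_le.1 hl (Nat.le_add_right k j)
  calc l.countP (· < l[k])
      = (l.take k).countP (· < l[k]) + (l.drop k).countP (· < l[k]) := by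
        rw [← countP_append, take_append_drop]
    _ ≤ k := by
        rw [hdrop, add_zero]
        exact countP_le_length.trans (length_take_le _ _)

theorem countP_getElem_lt_le (hl : l.SortedLE) {k : ℕ} (hk : k < l.length) :
    l.countP (l[k] < ·) ≤ l.length - (k + 1) := by
  have htake : (l.take (k + 1)).countP (l[k] < ·) = 0 := by
    refine countP_eq_zero.2 fun y hy => ?_
    obtain ⟨j, hj, rfl⟩ := mem_iff_getElem.1 hy
    rw [getElem_take]
    simpa using sortedLE_iff_getElem_le_getElem_of_le.1 hl
      (Nat.le_of_lt_succ (lt_of_lt_of_le hj (length_take_le _ _)))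
  calc l.countP (l[k] < ·)
      = (l.take (k + 1)).countP (l[k] < ·) + (l.drop (k + 1)).countP (l[k] < ·) := by
        rw [← countP_append, take_append_drop]
    _ ≤ l.length - (k + 1) := by
        rw [htake, zero_add, ← length_drop]
        exact countP_le_length

end List.SortedLE

namespace Multiset

variable (S : Multiset ℝ) {m c : ℝ}

theorem sum_map_abs_sub_add_mul_le (h : m ≤ c) :
    (S.map (|m - ·|)).sum + (c - m) * ((S.countP (· ≤ m) : ℝ) - S.countP (m < ·)) ≤
      (S.map (|c - ·|)).sum := by
  induction S using Multiset.induction_on with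
  | empty => simp
  | cons y S ih =>
    by_cases hy : y ≤ m
    · simp only [countP_cons, hy, not_lt.2 hy, map_cons, sum_cons, if_true, if_false,
        Nat.cast_add, Nat.cast_one, add_zero]
      rw [abs_of_nonneg (sub_nonneg.2 hy), abs_of_nonneg (by linarith : 0 ≤ c - y)]
      linarith
    · simp only [countP_cons, hy, not_le.1 hy, map_cons, sum_cons, if_true, if_false,
        Nat.cast_add, Nat.cast_one, add_zero]
      have : |m - y| ≤ |c - y| + (c - m) := by
        have := abs_sub_le m c y
        rw [abs_sub_comm m c, abs_of_nonneg (sub_nonneg.2 h)] at this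
        linarith
      linarith

theorem sum_map_abs_sub_add_le_of_le (h : m ≤ c) (hS : 2 * S.countP (m < ·) < card S) :
    (S.map (|m - ·|)).sum + (c - m) ≤ (S.map (|c - ·|)).sum := by
  have hcard : card S = S.countP (m < ·) + S.countP (· ≤ m) := by
    simpa only [not_lt] using card_eq_countP_add_countP (m < ·) S
  have hmaj : (1 : ℝ) ≤ S.countP (· ≤ m) - S.countP (m < ·) := by
    have : ((S.countP (m < ·) + 1 : ℕ) : ℝ) ≤ S.countP (· ≤ m) := by exact_mod_cast (by omega)
    push_cast at this
    linarith
  have := mul_le_mul_of_nonneg_left hmaj (sub_nonneg.2 h)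
  linarith [sum_map_abs_sub_add_mul_le S h]

theorem sum_map_abs_sub_add_le_of_ge (h : c ≤ m) (hS : 2 * S.countP (· < m) < card S) :
    (S.map (|m - ·|)).sum + (m - c) ≤ (S.map (|c - ·|)).sum := by
  have hneg : 2 * (S.map Neg.neg).countP (-m < ·) < card (S.map Neg.neg) := by
    rw [countP_map, card_map]
    simpa [countP_eq_card_filter] using hS
  have key := sum_map_abs_sub_add_le_of_le (S.map Neg.neg) (neg_le_neg h) hneg
  simp only [map_map, Function.comp_def] at key
  convert key using 2 <;> simp [abs_sub_comm, neg_add_eq_sub]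

theorem sum_map_abs_sub_add_abs_le (hlt : 2 * S.countP (· < m) < card S)
    (hgt : 2 * S.countP (m < ·) < card S) (c : ℝ) :
    (S.map (|m - ·|)).sum + |c - m| ≤ (S.map (|c - ·|)).sum := by
  rcases le_total m c with h | h
  · rw [abs_of_nonneg (sub_nonneg.2 h)]
    exact sum_map_abs_sub_add_le_of_le S h hgt
  · rw [abs_sub_comm, abs_of_nonneg (sub_nonneg.2 h)]
    exact sum_map_abs_sub_add_le_of_ge S h hlt

theorem exists_two_mul_countP_lt_of_odd (hodd : Odd (card S)) :
    ∃ m, 2 * S.countP (· < m) < card S ∧ 2 * S.countP (m < ·) < card S := by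
  obtain ⟨k, hk⟩ := hodd
  set l := S.sort (· ≤ ·)
  have hS : (l : Multiset ℝ) = S := sort_eq S _
  have hlen : l.length = 2 * k + 1 := by rw [length_sort, hk]
  have hl : l.SortedLE := (S.pairwise_sort (· ≤ ·)).sortedLE
  have hkl : k < l.length := by omega
  refine ⟨l[k], ?_, ?_⟩ <;> rw [← hS, coe_countP, coe_card]
  · have := hl.countP_lt_getElem_le hkl
    omega
  · have := hl.countP_getElem_lt_le hkl
    omega

end Multiset

theorem stmt_4 (S : Multiset ℝ) (hodd : Odd S.card) :
    ∃! a : ℝ, ∀ c : ℝ,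
      (S.map (fun y => |a - y|)).sum ≤ (S.map (fun y => |c - y|)).sum := by
  obtain ⟨m, hlt, hgt⟩ := S.exists_two_mul_countP_lt_of_odd hodd
  have hmin := S.sum_map_abs_sub_add_abs_le hlt hgt
  refine ⟨m, fun c => (le_add_of_nonneg_right (abs_nonneg _)).trans (hmin c), fun a ha => ?_⟩
  have : |a - m| ≤ 0 := by linarith [hmin a, ha m]
  exact sub_eq_zero.1 (abs_nonpos_iff.1 this)
end

section
/- For γ ∈ (0,2], let n, k ∈ ℕ satisfy k = nγ/(γ+2) and n > k+1, let t = ⌈n(γ+2)⌉, and let S be the multiset with (k+1)(2t+1)+t(n−k−1) copies of 0 and (n−k−1)(t+1) copies of 1. Then for every c ∈ [0,1], Σ_{y∈S}|c−y| / Σ_{y∈S}|y| ≥ 1 + c·(γ + 3/(2n−γ−2)). -/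
theorem stmt_7 (γ : ℝ) (hγ0 : 0 < γ) (hγ2 : γ ≤ 2) (n k : ℕ)
    (hk : (k : ℝ) = n * γ / (γ + 2)) (hn : k + 1 < n)
    (t : ℕ) (ht : t = ⌈(n : ℝ) * (γ + 2)⌉₊)
    (c : ℝ) (hc0 : 0 ≤ c) (hc1 : c ≤ 1) :
    let S := Multiset.replicate ((k + 1) * (2 * t + 1) + t * (n - k - 1)) (0 : ℝ) +
             Multiset.replicate ((n - k - 1) * (t + 1)) (1 : ℝ)
    1 + c * (γ + 3 / (2 * n - γ - 2)) ≤
      (S.map (fun y => |c - y|)).sum / (S.map (fun y => |y|)).sum := by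
  intro S
  have hu : (0:ℝ) < γ + 2 := by linarith
  have hkr : (k:ℝ) * (γ + 2) = n * γ := by
    rw [hk]; field_simp
  set m : ℕ := n - k - 1 with hmdef
  have hmr : ((m : ℕ) : ℝ) = (n:ℝ) - k - 1 := by
    rw [hmdef, Nat.cast_sub (by omega), Nat.cast_sub (by omega), Nat.cast_one]
  have hm1 : (1:ℝ) ≤ (m:ℝ) := by
    have : 1 ≤ m := by omega
    exact_mod_cast this
  have ht' : (n:ℝ) * (γ + 2) ≤ t := by rw [ht]; exact Nat.le_ceil _
  have hmu : (m:ℝ) * (γ + 2) = 2*n - γ - 2 := by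
    rw [hmr]; linear_combination -hkr
  have hD2 : (0:ℝ) < 2*n - γ - 2 := by nlinarith
  have hγm : γ * (m:ℝ) = 2*k - γ := by
    rw [hmr]; linear_combination -hkr
  have hm0 : (m:ℝ) ≠ 0 := by linarith
  simp only [S, Multiset.map_add, Multiset.map_replicate, Multiset.sum_add,
    Multiset.sum_replicate, smul_eq_mul, nsmul_eq_mul, sub_zero, abs_of_nonneg hc0,
    abs_zero, abs_one, mul_zero, mul_one, zero_add]
  have habs : |c - 1| = 1 - c := by rw [abs_of_nonpos (by linarith)]; ring
  rw [habs]
  have hDpos : (0:ℝ) < ((m * (t + 1) : ℕ) : ℝ) := by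
    push_cast; nlinarith [Nat.cast_nonneg (α := ℝ) t]
  rw [le_div_iff₀ hDpos]
  push_cast
  -- key inequality
  have hγmt : γ * (m:ℝ) * (t:ℝ) = (2*k - γ) * t := by rw [hγm]
  have h1 : (γ^2 + 4*γ + 1) * ((n:ℝ) * (γ+2)) ≤ (γ^2 + 4*γ + 1) * t := by
    apply mul_le_mul_of_nonneg_left ht'; nlinarith
  have h2 : (0:ℝ) ≤ (n:ℝ) * (γ+2) * (γ^2 + 4*γ) := by positivity
  have key2 : (3:ℝ)*((t:ℝ)+1) ≤
      ((((k:ℝ)+1)*(2*(t:ℝ)+1) + (t:ℝ)*(m:ℝ)) - (γ+1)*((m:ℝ)*((t:ℝ)+1)))*(γ+2) := by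
    nlinarith [h1, h2, hγmt, hγm, hmr]
  have key : (γ + 3 / (2*(n:ℝ) - γ - 2) + 1) * ((m:ℝ)*((t:ℝ)+1)) ≤
      ((k:ℝ)+1)*(2*(t:ℝ)+1) + (t:ℝ)*(m:ℝ) := by
    rw [← hmu]
    rw [show (γ + 3 / ((m:ℝ)*(γ+2)) + 1) * ((m:ℝ)*((t:ℝ)+1))
        = (γ+1) * ((m:ℝ)*(t+1)) + 3*((t:ℝ)+1)/(γ+2) from by field_simp; ring]
    have h := (div_le_iff₀ hu).mpr key2
    linarith
  have h3 := mul_le_mul_of_nonneg_left key hc0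
  linarith [h3]
end

section
/- For any real γ > 0, the function h_γ(P) = (1 + (1/γ² − 1)P²)/(1 − 2P + (1/γ² + 1)P²) on the domain P ∈ [0,1] attains its maximum at P = γ/(1+γ), and h_γ(γ/(1+γ)) = 1 + γ. -/
theorem stmt_8 (γ : ℝ) (hγ0 : 0 < γ) (hγ1 : γ ≤ 1) :
    (∀ P : ℝ, 0 ≤ P → P ≤ 1 →
      (1 + (1 / γ ^ 2 - 1) * P ^ 2) / (1 - 2 * P + (1 / γ ^ 2 + 1) * P ^ 2) ≤
        (1 + (1 / γ ^ 2 - 1) * (γ / (1 + γ)) ^ 2) /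
          (1 - 2 * (γ / (1 + γ)) + (1 / γ ^ 2 + 1) * (γ / (1 + γ)) ^ 2)) ∧
    (1 + (1 / γ ^ 2 - 1) * (γ / (1 + γ)) ^ 2) /
        (1 - 2 * (γ / (1 + γ)) + (1 / γ ^ 2 + 1) * (γ / (1 + γ)) ^ 2) = 1 + γ := by
  have hγ2 : (0:ℝ) < γ ^ 2 := by positivity
  have h1γ : (0:ℝ) < 1 + γ := by linarith
  have hD : ∀ P : ℝ, 0 < 1 - 2 * P + (1 / γ ^ 2 + 1) * P ^ 2 := by
    intro P
    have heq : 1 - 2 * P + (1 / γ ^ 2 + 1) * P ^ 2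
        = (γ ^ 2 - 2 * γ ^ 2 * P + (1 + γ ^ 2) * P ^ 2) / γ ^ 2 := by
      field_simp
    rw [heq]
    apply div_pos _ hγ2
    rcases eq_or_ne P 0 with rfl | hP
    · nlinarith
    · have hP2 : (0:ℝ) < P ^ 2 := by positivity
      nlinarith [sq_nonneg (P - γ ^ 2), mul_pos hγ2 hP2,
        mul_nonneg hγ2.le (sub_nonneg.2 (show γ ^ 2 ≤ 1 by nlinarith))]
  have hval : (1 + (1 / γ ^ 2 - 1) * (γ / (1 + γ)) ^ 2) /
      (1 - 2 * (γ / (1 + γ)) + (1 / γ ^ 2 + 1) * (γ / (1 + γ)) ^ 2) = 1 + γ := by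
    rw [div_eq_iff (hD _).ne']
    field_simp
    ring
  refine ⟨fun P hP0 hP1 => ?_, hval⟩
  rw [hval, div_le_iff₀ (hD P)]
  have key : γ ^ 2 * ((1 + γ) * (1 - 2 * P + (1 / γ ^ 2 + 1) * P ^ 2)
      - (1 + (1 / γ ^ 2 - 1) * P ^ 2)) = γ * (γ - (1 + γ) * P) ^ 2 := by
    field_simp
    ring
  nlinarith [key, mul_nonneg hγ0.le (sq_nonneg (γ - (1 + γ) * P)), hγ2]
end

section
/- For any real γ ∈ (0,1], the function g_γ(N) = (1 + (γ² − 1)N²)/(1 − 2N + (γ² + 1)N²) on [0,1] attains its maximum at N = 1/(1+γ), and g_γ(1/(1+γ)) = 1 + 1/γ. -/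
theorem stmt_9 (γ : ℝ) (hγ0 : 0 < γ) (hγ1 : γ ≤ 1) :
    (∀ N : ℝ, 0 ≤ N → N ≤ 1 →
      (1 + (γ ^ 2 - 1) * N ^ 2) / (1 - 2 * N + (γ ^ 2 + 1) * N ^ 2) ≤
        (1 + (γ ^ 2 - 1) * (1 / (1 + γ)) ^ 2) /
          (1 - 2 * (1 / (1 + γ)) + (γ ^ 2 + 1) * (1 / (1 + γ)) ^ 2)) ∧
    (1 + (γ ^ 2 - 1) * (1 / (1 + γ)) ^ 2) /
        (1 - 2 * (1 / (1 + γ)) + (γ ^ 2 + 1) * (1 / (1 + γ)) ^ 2) = 1 + 1 / γ := by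
  have h1γ : (0:ℝ) < 1 + γ := by linarith
  have hval : (1 + (γ ^ 2 - 1) * (1 / (1 + γ)) ^ 2) /
      (1 - 2 * (1 / (1 + γ)) + (γ ^ 2 + 1) * (1 / (1 + γ)) ^ 2) = 1 + 1 / γ := by
    rw [div_eq_iff]
    · field_simp
      ring
    · have : 1 - 2 * (1 / (1 + γ)) + (γ ^ 2 + 1) * (1 / (1 + γ)) ^ 2 =
          (1 - 1 / (1 + γ)) ^ 2 + γ ^ 2 * (1 / (1 + γ)) ^ 2 := by ring
      rw [this]
      positivity
  refine ⟨fun N hN0 hN1 => ?_, hval⟩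
  rw [hval]
  have hD : 0 < 1 - 2 * N + (γ ^ 2 + 1) * N ^ 2 := by
    have : 1 - 2 * N + (γ ^ 2 + 1) * N ^ 2 = (1 - N) ^ 2 + γ ^ 2 * N ^ 2 := by ring
    rw [this]
    rcases eq_or_lt_of_le hN0 with h | h
    · rw [← h]; norm_num
    · have : 0 < γ ^ 2 * N ^ 2 := by positivity
      nlinarith [sq_nonneg (1 - N)]
  rw [div_le_iff₀ hD]
  have key : (1 + 1 / γ) * (1 - 2 * N + (γ ^ 2 + 1) * N ^ 2) - (1 + (γ ^ 2 - 1) * N ^ 2)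
      = (1 - (1 + γ) * N) ^ 2 / γ := by
    field_simp
    ring
  nlinarith [sq_nonneg (1 - (1 + γ) * N), div_nonneg (sq_nonneg (1 - (1 + γ) * N)) hγ0.le]
end

section
/- Median shift bound: let T be a finite multiset of reals and λ|S| ∈ ℕ a fixed weight with λ|S| ≤ (|T| + λ|S|)/2. For a ∈ ℝ, let med(a) denote the largest median of the multiset T ⊎ {a}^{λ|S|} (T together with λ|S| copies of a). Then for any a ≤ a′, |med(a′) − med(a)| ≤ |a′ − a|. -/
/-- `b` is a median of the multiset `M`: at least half the elements (with
multiplicity) are `≤ b` and at least half are `≥ b`. -/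
def IsMedian (M : Multiset ℝ) (b : ℝ) : Prop :=
  M.card ≤ 2 * (M.filter (fun y => y ≤ b)).card ∧
  M.card ≤ 2 * (M.filter (fun y => b ≤ y)).card

/-- `b` is the largest median of `M`. -/
def IsLargestMedian (M : Multiset ℝ) (b : ℝ) : Prop :=
  IsMedian M b ∧ ∀ b' : ℝ, IsMedian M b' → b' ≤ b

lemma card_filter_replicate (p : ℝ → Prop) [DecidablePred p] (w : ℕ) (a : ℝ) :
    ((Multiset.replicate w a).filter p).card = if p a then w else 0 := by
  induction w with
  | zero => simp
  | succ n ih =>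
    rw [Multiset.replicate_succ, Multiset.filter_cons]
    by_cases h : p a <;> simp [h, ih]

lemma card_le_not_le (M : Multiset ℝ) (b : ℝ) :
    (M.filter (fun y => y ≤ b)).card + (M.filter (fun y => b < y)).card = M.card := by
  have h1 : M.filter (fun y => b < y) = M.filter (fun y => ¬ y ≤ b) :=
    Multiset.filter_congr (fun x _ => by simp [not_le])
  rw [h1, ← Multiset.card_add, Multiset.filter_add_not]

lemma card_ge_not_ge (M : Multiset ℝ) (b : ℝ) :
    (M.filter (fun y => b ≤ y)).card + (M.filter (fun y => y < b)).card = M.card := by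
  have h1 : M.filter (fun y => y < b) = M.filter (fun y => ¬ b ≤ y) :=
    Multiset.filter_congr (fun x _ => by simp [not_le])
  rw [h1, ← Multiset.card_add, Multiset.filter_add_not]

/-- characterization of the largest median via strict counts -/
lemma largestMedian_iff (M : Multiset ℝ) (b : ℝ) :
    IsLargestMedian M b ↔
      2 * (M.filter (fun y => y < b)).card ≤ M.card ∧
      2 * (M.filter (fun y => b < y)).card < M.card := by
  constructor
  · rintro ⟨⟨hle, hge⟩, hmax⟩
    have hlt : 2 * (M.filter (fun y => y < b)).card ≤ M.card := by
      have := card_ge_not_ge M b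
      omega
    refine ⟨hlt, ?_⟩
    -- show strictly: 2 * cnt(>b) < card
    by_contra hc
    push_neg at hc
    -- find c > b which is a median
    set S := M.filter (fun y => b < y) with hS
    have hS0 : S ≠ 0 := by
      intro h0
      rw [h0] at hc
      simp at hc
      -- card M = 0, so M = 0, then b+1 is a median
      have hM0 : M = 0 := hc
      have : IsMedian M (b + 1) := by constructor <;> simp [hM0]
      have := hmax _ this
      linarith
    -- minimum element of S
    have hne : S.toFinset.Nonempty := by
      rw [Finset.nonempty_iff_ne_empty]
      simpa [Multiset.toFinset_eq_empty] using hS0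
    set m := S.toFinset.min' hne with hm
    have hmS : m ∈ S := Multiset.mem_toFinset.1 (S.toFinset.min'_mem hne)
    have hmb : b < m := (Multiset.mem_filter.1 hmS).2
    have hmin : ∀ x ∈ S, m ≤ x := fun x hx =>
      S.toFinset.min'_le x (Multiset.mem_toFinset.2 hx)
    -- m is a median of M
    have hmed_m : IsMedian M m := by
      constructor
      · calc M.card ≤ 2 * (M.filter (fun y => y ≤ b)).card := hle
          _ ≤ 2 * (M.filter (fun y => y ≤ m)).card := by
            have : (M.filter (fun y => y ≤ b)) ≤ M.filter (fun y => y ≤ m) :=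
              Multiset.monotone_filter_right M (fun x hx => le_trans hx hmb.le)
            have := Multiset.card_le_card this
            omega
      · calc M.card ≤ 2 * S.card := hc
          _ ≤ 2 * (M.filter (fun y => m ≤ y)).card := by
            have hSM : S ≤ M := Multiset.filter_le _ M
            have : S ≤ M.filter (fun y => m ≤ y) := by
              have h1 : S.filter (fun y => m ≤ y) = S := Multiset.filter_eq_self.2 hmin
              calc S = S.filter (fun y => m ≤ y) := h1.symm
                _ ≤ M.filter (fun y => m ≤ y) := Multiset.filter_le_filter _ hSM
            have := Multiset.card_le_card this
            omega
    have := hmax m hmed_m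
    linarith
  · rintro ⟨h1, h2⟩
    have e1 := card_le_not_le M b
    have e2 := card_ge_not_ge M b
    refine ⟨⟨by omega, by omega⟩, ?_⟩
    intro b' hb'
    by_contra hbb
    push_neg at hbb
    have : (M.filter (fun y => b' ≤ y)) ≤ M.filter (fun y => b < y) := by
      apply Multiset.monotone_filter_right
      intro x hx
      exact lt_of_lt_of_le hbb hx
    have hcard := Multiset.card_le_card this
    have := hb'.2
    omega

theorem stmt_14 (T : Multiset ℝ) (w : ℕ) (hw : 2 * w ≤ T.card + w)
    (a a' : ℝ) (haa : a ≤ a') (med med' : ℝ)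
    (hmed : IsLargestMedian (T + Multiset.replicate w a) med)
    (hmed' : IsLargestMedian (T + Multiset.replicate w a') med') :
    |med' - med| ≤ |a' - a| := by
  have key : ∀ (b c : ℝ) (u : ℕ),
      ((T + Multiset.replicate u c).filter (fun y => y < b)).card
        = (T.filter (fun y => y < b)).card + (if c < b then u else 0) := by
    intro b c u
    rw [Multiset.filter_add, Multiset.card_add, card_filter_replicate]
  have key2 : ∀ (b c : ℝ) (u : ℕ),
      ((T + Multiset.replicate u c).filter (fun y => b < y)).card
        = (T.filter (fun y => b < y)).card + (if b < c then u else 0) := by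
    intro b c u
    rw [Multiset.filter_add, Multiset.card_add, card_filter_replicate]
  have hcard : ∀ (c : ℝ), (T + Multiset.replicate w c).card = T.card + w := by
    intro c; simp
  rw [largestMedian_iff] at hmed hmed'
  rw [key, key2, hcard] at hmed
  rw [key, key2, hcard] at hmed'
  obtain ⟨h1, h2⟩ := hmed
  obtain ⟨h1', h2'⟩ := hmed'
  rw [abs_of_nonneg (by linarith : (0:ℝ) ≤ a' - a), abs_sub_le_iff]
  constructor
  · -- med' - med ≤ a' - a
    by_contra hcon
    push_neg at hcon
    have hmm : med < med' := by linarith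
    -- coverage: T.card ≤ cnt(med < ·) + cnt(· < med')
    have hcov : T.card ≤ (T.filter (fun y => med < y)).card
        + (T.filter (fun y => y < med')).card := by
      have hsub : T.filter (fun y => ¬ med < y) ≤ T.filter (fun y => y < med') :=
        Multiset.monotone_filter_right T (fun x hx => lt_of_le_of_lt (not_lt.1 hx) hmm)
      have hc := Multiset.card_le_card hsub
      have he : (T.filter (fun y => med < y)).card
          + (T.filter (fun y => ¬ med < y)).card = T.card := by
        rw [← Multiset.card_add, Multiset.filter_add_not]
      omega
    by_cases hc1 : med < a <;> by_cases hc2 : a' < med' <;>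
      simp only [hc1, hc2, if_true, if_false] at h2 h1'
    · omega
    · omega
    · omega
    · -- med ≥ a and a' ≥ med'
      push_neg at hc1 hc2
      linarith
  · -- med - med' ≤ a' - a
    by_contra hcon
    push_neg at hcon
    have hmm : med' < med := by linarith
    have hcov : T.card ≤ (T.filter (fun y => y < med)).card
        + (T.filter (fun y => med' < y)).card := by
      have hsub : T.filter (fun y => ¬ y < med) ≤ T.filter (fun y => med' < y) :=
        Multiset.monotone_filter_right T (fun x hx => lt_of_lt_of_le hmm (not_lt.1 hx))
      have hc := Multiset.card_le_card hsub
      have he : (T.filter (fun y => y < med)).card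
          + (T.filter (fun y => ¬ y < med)).card = T.card := by
        rw [← Multiset.card_add, Multiset.filter_add_not]
      omega
    by_cases hc1 : a < med <;> by_cases hc2 : med' < a' <;>
      simp only [hc1, hc2, if_true, if_false] at h1 h2'
    · omega
    · omega
    · omega
    · push_neg at hc1 hc2
      linarith
end

section
/- Lower bound instance ratio: fix n, k, t ∈ ℕ with k = nγ/(γ+2) for γ ∈ (0,2], n > k+1, t = ⌈n(γ+2)⌉, and D′ ≥ D > 1. Let S be the multiset with (t+1)(k+1) copies of 0 and t(k+1)+(2t+1)(n−k−1) copies of D′. Then for any a < 1, (Σ_{y∈S}|a−y|)/(Σ_{y∈S}|D′−y|) ≥ ((D−1)/D)·(4 + γ − 9/n)/(γ + 4/n). -/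
lemma key_ineq (k m t : ℝ) (hk : 0 ≤ k) (hkm : k ≤ m) (hm : 2 ≤ m) (ht : 0 ≤ t)
    (htm : 2 * (k + m) ^ 2 ≤ t * m) :
    ((k + m) * (4 * m + 2 * k) - 9 * m) * ((t + 1) * (k + 1)) ≤
      ((k + m) * (2 * k) + 4 * m) * (t * (k + 1) + (2 * t + 1) * (m - 1)) := by
  nlinarith [mul_nonneg (sub_nonneg.2 htm) (by nlinarith : (0:ℝ) ≤ 5*k*m + 5*m + 4*m^2 - 4*k^2),
    mul_nonneg (mul_nonneg hk hk) hk, mul_nonneg hk (sub_nonneg.2 hkm),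
    mul_nonneg (mul_nonneg hk hk) (sub_nonneg.2 hkm),
    mul_nonneg (sub_nonneg.2 hkm) (by linarith : (0:ℝ) ≤ k + m),
    mul_nonneg (mul_nonneg (by linarith : (0:ℝ) ≤ m) (by linarith : (0:ℝ) ≤ m)) (sub_nonneg.2 hkm),
    sq_nonneg (k+m), sq_nonneg (m-k), mul_nonneg hk (by linarith : (0:ℝ) ≤ m)]

set_option maxHeartbeats 2000000 in
theorem stmt_18 (γ : ℝ) (h0 : 0 < γ) (h2 : γ ≤ 2) (n k : ℕ)
    (hk : (k : ℝ) = n * γ / (γ + 2)) (hn : k + 1 < n)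
    (t : ℕ) (ht : t = ⌈(n : ℝ) * (γ + 2)⌉₊)
    (D D' : ℝ) (hD : 1 < D) (hDD : D ≤ D')
    (a : ℝ) (ha : a < 1) :
    let S := Multiset.replicate ((t + 1) * (k + 1)) (0 : ℝ) +
             Multiset.replicate (t * (k + 1) + (2 * t + 1) * (n - k - 1)) D'
    ((D - 1) / D) * (4 + γ - 9 / (n : ℝ)) / (γ + 4 / (n : ℝ)) ≤
      (S.map (fun y => |a - y|)).sum / (S.map (fun y => |D' - y|)).sum := by
  intro S
  have hD'1 : (1:ℝ) < D' := lt_of_lt_of_le hD hDD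
  have hD'0 : (0:ℝ) < D' := by linarith
  obtain ⟨m, hnm, hm2⟩ : ∃ m, n = k + m ∧ 2 ≤ m := ⟨n - k, by omega, by omega⟩
  have hmR : (2:ℝ) ≤ (m:ℝ) := by exact_mod_cast hm2
  have hkR : (0:ℝ) ≤ (k:ℝ) := Nat.cast_nonneg k
  have htR0 : (0:ℝ) ≤ (t:ℝ) := Nat.cast_nonneg t
  have hnR : (n:ℝ) = (k:ℝ) + m := by rw [hnm]; push_cast; ring
  have hn0 : (0:ℝ) < (n:ℝ) := by rw [hnR]; linarith
  have hγ2 : (0:ℝ) < γ + 2 := by linarith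
  -- γ * m = 2 * k
  have hγm : γ * m = 2 * k := by
    have h1 : (k:ℝ) * (γ + 2) = n * γ := by
      field_simp at hk; linarith [hk]
    rw [hnR] at h1; linarith [h1]
  have hkm : (k:ℝ) ≤ (m:ℝ) := by nlinarith
  -- t bound
  have htn : (n:ℝ) * (γ + 2) ≤ (t:ℝ) := by rw [ht]; exact Nat.le_ceil _
  have htm : 2 * ((k:ℝ) + m) ^ 2 ≤ (t:ℝ) * m := by
    have h3 := mul_le_mul_of_nonneg_right htn (by linarith : (0:ℝ) ≤ (m:ℝ))
    rw [hnR] at h3; nlinarith [h3]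
  -- abbreviations for the cast counts
  set AR : ℝ := ((t:ℝ) + 1) * ((k:ℝ) + 1) with hAR
  set BR : ℝ := (t:ℝ) * ((k:ℝ) + 1) + (2 * (t:ℝ) + 1) * ((m:ℝ) - 1) with hBR
  have hA0 : (0:ℝ) < AR := by positivity
  have hB0 : (0:ℝ) ≤ BR := by nlinarith
  have hcastA : (((t + 1) * (k + 1) : ℕ) : ℝ) = AR := by push_cast; ring
  have hcastB : ((t * (k + 1) + (2 * t + 1) * (n - k - 1) : ℕ) : ℝ) = BR := by
    have : n - k - 1 = m - 1 := by omega
    rw [this]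
    have h1 : (1:ℕ) ≤ m := by omega
    push_cast [Nat.cast_sub h1]; ring
  -- compute the two sums
  have e1 : (S.map (fun y => |a - y|)).sum = AR * |a| + BR * (D' - a) := by
    have habs1 : |a - (0:ℝ)| = |a| := by rw [sub_zero]
    have habs2 : |a - D'| = D' - a := by rw [abs_sub_comm]; exact abs_of_nonneg (by linarith)
    simp only [S, Multiset.map_add, Multiset.map_replicate, Multiset.sum_add,
      Multiset.sum_replicate, nsmul_eq_mul, habs1, habs2]
    rw [hcastA, hcastB]
  have e2 : (S.map (fun y => |D' - y|)).sum = AR * D' := by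
    have habs1 : |D' - (0:ℝ)| = D' := by rw [sub_zero]; exact abs_of_nonneg (by linarith)
    have habs2 : |D' - D'| = 0 := by simp
    simp only [S, Multiset.map_add, Multiset.map_replicate, Multiset.sum_add,
      Multiset.sum_replicate, nsmul_eq_mul, habs1, habs2]
    rw [hcastA]; ring
  rw [e1, e2]
  clear e1 e2 hcastA hcastB
  clear S
  -- main chain
  have hg4 : (0:ℝ) < γ + 4 / (n:ℝ) := by positivity
  have hng4 : (0:ℝ) < (n:ℝ) * γ + 4 := by positivity
  -- key ratio inequality
  have hq : (4 + γ - 9 / (n:ℝ)) / (γ + 4 / (n:ℝ)) ≤ BR / AR := by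
    have hrw : (4 + γ - 9 / (n:ℝ)) / (γ + 4 / (n:ℝ)) =
        ((n:ℝ) * (4 + γ) - 9) / ((n:ℝ) * γ + 4) := by
      rw [div_eq_div_iff hg4.ne' hng4.ne']; field_simp
    rw [hrw, div_le_div_iff₀ hng4 hA0, mul_comm BR ((n:ℝ) * γ + 4)]
    have hkey := key_ineq (k:ℝ) (m:ℝ) (t:ℝ) hkR hkm hmR htR0 htm
    have e3 : ((n:ℝ) * (4 + γ) - 9) * AR * m =
        (((k:ℝ) + m) * (4 * m + 2 * k) - 9 * m) * (((t:ℝ) + 1) * ((k:ℝ) + 1)) := by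
      rw [hnR, hAR]
      linear_combination (((t:ℝ) + 1) * ((k:ℝ) + 1) * ((k:ℝ) + (m:ℝ))) * hγm
    have e4 : ((n:ℝ) * γ + 4) * BR * m =
        (((k:ℝ) + m) * (2 * k) + 4 * m) *
          ((t:ℝ) * ((k:ℝ) + 1) + (2 * (t:ℝ) + 1) * ((m:ℝ) - 1)) := by
      rw [hnR, hBR]
      linear_combination (((t:ℝ) * ((k:ℝ) + 1) + (2 * (t:ℝ) + 1) * ((m:ℝ) - 1)) * ((k:ℝ) + (m:ℝ))) * hγm
    have h5 : ((n:ℝ) * (4 + γ) - 9) * AR * m ≤ ((n:ℝ) * γ + 4) * BR * m := by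
      rw [e3, e4]; exact hkey
    exact le_of_mul_le_mul_right h5 (by linarith)
  have hd : (D - 1) / D ≤ (D' - 1) / D' := by
    rw [div_le_div_iff₀ (show (0:ℝ) < D from by linarith) hD'0]; nlinarith
  have step1 : ((D - 1) / D) * (4 + γ - 9 / (n:ℝ)) / (γ + 4 / (n:ℝ)) ≤
      BR * (D' - 1) / (AR * D') := by
    have hRHS : BR * (D' - 1) / (AR * D') = (BR / AR) * ((D' - 1) / D') := by
      rw [div_mul_div_comm]
    rw [hRHS]
    by_cases hsgn : 4 + γ - 9 / (n:ℝ) ≤ 0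
    · have hL : ((D - 1) / D) * (4 + γ - 9 / (n:ℝ)) / (γ + 4 / (n:ℝ)) ≤ 0 := by
        apply div_nonpos_of_nonpos_of_nonneg _ hg4.le
        exact mul_nonpos_of_nonneg_of_nonpos (div_nonneg (by linarith) (by linarith)) hsgn
      have hR : (0:ℝ) ≤ (BR / AR) * ((D' - 1) / D') :=
        mul_nonneg (div_nonneg hB0 hA0.le) (div_nonneg (by linarith) hD'0.le)
      linarith
    · push_neg at hsgn
      rw [mul_div_assoc, mul_comm (BR / AR)]
      exact mul_le_mul hd hq (div_nonneg (by linarith) hg4.le) (div_nonneg (by linarith) hD'0.le)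
  refine le_trans step1 ?_
  have hnum : BR * (D' - 1) ≤ AR * |a| + BR * (D' - a) := by
    nlinarith [abs_nonneg a, hA0.le, hB0]
  exact (div_le_div_iff_of_pos_right (by positivity : (0:ℝ) < AR * D')).2 hnum
end

section
/- SRDA expected-risk consistency bound: let γ ∈ (0,1], P ∈ [0,1], and r* ∈ [0, 1/2] with 1 − r* ≤ ((1+P)/(1−P))·r* (when P < 1). Then the convex combination ((P/γ)²/((P/γ)² + (1−P)²))·r* + ((1−P)²/((P/γ)² + (1−P)²))·(1−r*) is at most (1+γ)·r*. -/
theorem div_mul_add_div_mul_le_iff {a b d x y z : ℝ} (hd : 0 < d) :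
    a / d * x + b / d * y ≤ z ↔ a * x + b * y ≤ z * d := by
  rw [div_mul_eq_mul_div, div_mul_eq_mul_div, ← add_div, div_le_iff₀ hd]

/-- With `q = 1 - P` and `s = 2r - q ≥ 0`, twice the gap between the two sides is
`γ q (u - q)² + s (γ u² + (2 + γ) q²)`, where `P = γ u` and `P + q = 1` are used. -/
theorem sq_mul_add_sub_sq_mul_one_sub_le {γ P u r : ℝ} (hγ : 0 ≤ γ) (hP : P ≤ 1)
    (hu : P = γ * u) (hr : 1 - P ≤ 2 * r) :
    u ^ 2 * r + (1 - P) ^ 2 * (1 - r) ≤ (1 + γ) * r * (u ^ 2 + (1 - P) ^ 2) := by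
  subst hu
  have hq : 0 ≤ 1 - γ * u := by linarith
  have hs : 0 ≤ 2 * r - (1 - γ * u) := by linarith
  have h₁ : 0 ≤ γ * (1 - γ * u) * (u - (1 - γ * u)) ^ 2 := by positivity
  have h₂ : 0 ≤ (2 * r - (1 - γ * u)) * (γ * u ^ 2 + (2 + γ) * (1 - γ * u) ^ 2) := by positivity
  linear_combination h₁ / 2 + h₂ / 2

theorem stmt_19_general (γ P r : ℝ) (hγ0 : 0 < γ) (hP1 : P < 1)
    (h : (1 - P) * (1 - r) ≤ (1 + P) * r) :
    ((P / γ) ^ 2 / ((P / γ) ^ 2 + (1 - P) ^ 2)) * r +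
        ((1 - P) ^ 2 / ((P / γ) ^ 2 + (1 - P) ^ 2)) * (1 - r) ≤ (1 + γ) * r := by
  have hr : 1 - P ≤ 2 * r := by linarith
  have hD : 0 < (P / γ) ^ 2 + (1 - P) ^ 2 := by
    have := sub_pos.2 hP1
    positivity
  rw [div_mul_add_div_mul_le_iff hD]
  exact sq_mul_add_sub_sq_mul_one_sub_le hγ0.le hP1.le (mul_div_cancel₀ P hγ0.ne').symm hr

theorem stmt_19 (γ P r : ℝ) (hγ0 : 0 < γ) (hγ1 : γ ≤ 1)
    (hP0 : 0 ≤ P) (hP1 : P < 1) (hr0 : 0 ≤ r) (hr2 : r ≤ 1 / 2)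
    (h : (1 - P) * (1 - r) ≤ (1 + P) * r) :
    ((P / γ) ^ 2 / ((P / γ) ^ 2 + (1 - P) ^ 2)) * r +
        ((1 - P) ^ 2 / ((P / γ) ^ 2 + (1 - P) ^ 2)) * (1 - r) ≤ (1 + γ) * r :=
  stmt_19_general γ P r hγ0 hP1 h
end
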